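/- arXiv:1404.0161 — 5 statements merged into one kernel-verified Lean document; each statement's English description precedes it below -/
import Mathlib

section
/- Let f and g be nonzero polynomials with coprime leading monomials. Then S(f,g) has a standard representation with respect to {f,g}: there exist polynomials p, q with S(f,g) = p·f + q·g and lt(p·f), lt(q·g) < lcm(lt(f), lt(g)). -/
open MvPolynomial
open scoped MonomialOrder

namespace GB

variable {σ K : Type*} [Field K]

/-- The leading monomial (exponent vector) of `p` with respect to the monomial order `m`. -/
noncomputable def lm (m : MonomialOrder σ) (p : MvPolynomial σ K) : σ →₀ ℕ :=
  m.toSyn.symm (p.support.sup m.toSyn)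

/-- The leading coefficient of `p` with respect to `m`. -/
noncomputable def lc (m : MonomialOrder σ) (p : MvPolynomial σ K) : K :=
  p.coeff (lm m p)

/-- The leading term of `p` with respect to `m`. -/
noncomputable def lt (m : MonomialOrder σ) (p : MvPolynomial σ K) : MvPolynomial σ K :=
  monomial (lm m p) (lc m p)

/-- The (monic) least common multiple of two monomials, as pointwise sup of exponents. -/
noncomputable def mlcm (a b : σ →₀ ℕ) : σ →₀ ℕ := a ⊔ b

/-- The S-polynomial `S(f,g) = (λ/lt f)·f − (λ/lt g)·g` where `λ = lcm(lm f, lm g)`. -/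
noncomputable def sPoly (m : MonomialOrder σ) (f g : MvPolynomial σ K) : MvPolynomial σ K :=
  monomial (mlcm (lm m f) (lm m g) - lm m f) (lc m f)⁻¹ * f
    - monomial (mlcm (lm m f) (lm m g) - lm m g) (lc m g)⁻¹ * g

lemma toSyn_lm (m : MonomialOrder σ) (p : MvPolynomial σ K) :
    m.toSyn (lm m p) = p.support.sup m.toSyn := m.toSyn.apply_symm_apply _

lemma lm_mem_support (m : MonomialOrder σ) {p : MvPolynomial σ K} (hp : p ≠ 0) :
    lm m p ∈ p.support := by
  have hne : p.support.Nonempty := by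
    simpa [Finset.nonempty_iff_ne_empty, MvPolynomial.support_eq_empty] using hp
  obtain ⟨b, hb, hbe⟩ := Finset.exists_mem_eq_sup _ hne m.toSyn
  have : lm m p = b := by
    simp only [lm, hbe]
    exact m.toSyn.symm_apply_apply b
  rwa [this]

lemma lc_ne_zero (m : MonomialOrder σ) {p : MvPolynomial σ K} (hp : p ≠ 0) :
    lc m p ≠ 0 := by
  have := lm_mem_support m hp
  rwa [MvPolynomial.mem_support_iff] at this

lemma le_toSyn_lm (m : MonomialOrder σ) {p : MvPolynomial σ K} {b : σ →₀ ℕ}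
    (hb : b ∈ p.support) : m.toSyn b ≤ m.toSyn (lm m p) := by
  rw [toSyn_lm]
  exact Finset.le_sup hb

/-- Any monomial of `p - lt p` is strictly below `lm p`. -/
lemma lt_of_mem_support_sub_lt (m : MonomialOrder σ) {p : MvPolynomial σ K} {b : σ →₀ ℕ}
    (hb : b ∈ (p - lt m p).support) : m.toSyn b < m.toSyn (lm m p) := by
  classical
  rw [MvPolynomial.mem_support_iff] at hb
  have hcoeff : (p - lt m p).coeff b = p.coeff b - (if lm m p = b then lc m p else 0) := by
    simp [lt, MvPolynomial.coeff_sub, MvPolynomial.coeff_monomial]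
  by_cases hbe : b = lm m p
  · exfalso
    apply hb
    rw [hcoeff, if_pos hbe.symm, hbe]
    simp [lc]
  · have hbp : b ∈ p.support := by
      rw [MvPolynomial.mem_support_iff]
      intro h0
      apply hb
      rw [hcoeff, if_neg (fun h => hbe h.symm), h0, sub_zero]
    have hle := le_toSyn_lm m hbp
    refine lt_of_le_of_ne hle (fun h => hbe ?_)
    exact m.toSyn.injective h

/-- If every monomial of `h` is strictly below `A` and every monomial of `k` is at most `B`,
then `lm (h*k) ≺ A + B` (when `h*k ≠ 0`). -/
lemma lm_mul_lt (m : MonomialOrder σ) {h k : MvPolynomial σ K} {A B : σ →₀ ℕ}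
    (hA : ∀ b ∈ h.support, m.toSyn b < m.toSyn A)
    (hB : ∀ b ∈ k.support, m.toSyn b ≤ m.toSyn B)
    (hne : h * k ≠ 0) : lm m (h * k) ≺[m] A + B := by
  classical
  have key : ∀ b ∈ (h * k).support, m.toSyn b < m.toSyn (A + B) := by
    intro b hb
    have hb' := MvPolynomial.support_mul h k hb
    rw [Finset.mem_add] at hb'
    obtain ⟨b1, hb1, b2, hb2, rfl⟩ := hb'
    rw [map_add, map_add]
    exact add_lt_add_of_lt_of_le (hA b1 hb1) (hB b2 hb2)
  rw [toSyn_lm]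
  have hsupp : (h * k).support.Nonempty := by
    simpa [Finset.nonempty_iff_ne_empty, MvPolynomial.support_eq_empty] using hne
  obtain ⟨b0, hb0⟩ := hsupp
  have hbot : (⊥ : m.syn) < m.toSyn (A + B) := lt_of_le_of_lt bot_le (key b0 hb0)
  rw [Finset.sup_lt_iff hbot]
  exact key

/-- **Product criterion, standard representation form.** If `f, g` are nonzero with coprime
leading monomials, then `S(f,g) = p·f + q·g` where the leading monomials of `p·f` and `q·g`
are strictly below `lcm(lm f, lm g)`. -/
theorem product_criterion_std_rep (m : MonomialOrder σ) (f g : MvPolynomial σ K)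
    (hf : f ≠ 0) (hg : g ≠ 0)
    (hcop : mlcm (lm m f) (lm m g) = lm m f + lm m g) :
    ∃ p q : MvPolynomial σ K, sPoly m f g = p * f + q * g ∧
      (p * f = 0 ∨ (lm m (p * f) ≺[m] mlcm (lm m f) (lm m g))) ∧
      (q * g = 0 ∨ (lm m (q * g) ≺[m] mlcm (lm m f) (lm m g))) := by
  set c : K := (lc m f * lc m g)⁻¹ with hc
  set p : MvPolynomial σ K := C c * (lt m g - g) with hp
  set q : MvPolynomial σ K := C c * (f - lt m f) with hq
  have hlcf := lc_ne_zero m hf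
  have hlcg := lc_ne_zero m hg
  refine ⟨p, q, ?_, ?_, ?_⟩
  · -- the identity
    have h1 : mlcm (lm m f) (lm m g) - lm m f = lm m g := by
      rw [hcop, add_tsub_cancel_left]
    have h2 : mlcm (lm m f) (lm m g) - lm m g = lm m f := by
      rw [hcop, add_tsub_cancel_right]
    rw [sPoly, h1, h2, hp, hq, lt, lt]
    have e1 : (monomial (lm m g)) (lc m f)⁻¹ = C c * (monomial (lm m g)) (lc m g) := by
      rw [C_mul_monomial]
      congr 1
      field_simp [hc]
      rw [hc]; field_simp
    have e2 : (monomial (lm m f)) (lc m g)⁻¹ = C c * (monomial (lm m f)) (lc m f) := by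
      rw [C_mul_monomial]
      congr 1
      field_simp [hc]
      rw [hc]; field_simp
    rw [e1, e2]
    ring
  · -- bound for p * f
    by_cases hz : p * f = 0
    · exact Or.inl hz
    · refine Or.inr ?_
      rw [hcop]
      have hcomm : lm m f + lm m g = lm m g + lm m f := add_comm _ _
      rw [hcomm]
      refine lm_mul_lt m ?_ (fun b hb => le_toSyn_lm m hb) hz
      intro b hb
      have hsub : p.support ⊆ (g - lt m g).support := by
        have : p = (-c) • (g - lt m g) := by
          rw [hp, MvPolynomial.smul_eq_C_mul]; rw [map_neg]; ring
        rw [this]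
        exact Finsupp.support_smul
      exact lt_of_mem_support_sub_lt m (hsub hb)
  · -- bound for q * g
    by_cases hz : q * g = 0
    · exact Or.inl hz
    · refine Or.inr ?_
      rw [hcop]
      refine lm_mul_lt m ?_ (fun b hb => le_toSyn_lm m hb) hz
      intro b hb
      have hsub : q.support ⊆ (f - lt m f).support := by
        rw [hq, ← MvPolynomial.smul_eq_C_mul]
        exact Finsupp.support_smul
      exact lt_of_mem_support_sub_lt m (hsub hb)

end GB
end

section
/- If lm(h) divides lcm(lm(f), lm(g)) for nonzero polynomials f, g, h, then there exist monomials u and v such that S(f,g) = u·S(f,h) + v·S(h,g). -/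
/-!
Since `lm h` divides `λ = lcm(lm f, lm g)`, so do `lcm(lm f, lm h)` and `lcm(lm h, lm g)`.
Multiplying `S(f,h)` by `λ / lcm(lm f, lm h)` turns it into `(λ/lt f)·f − (λ/lt h)·h`, and
likewise for `S(h,g)`; these two rescaled S-polynomials telescope to `S(f,g)`.
-/

open MvPolynomial
open scoped MonomialOrder

namespace GB

variable {σ K : Type*} [Field K]

theorem le_mlcm_left (a b : σ →₀ ℕ) : a ≤ mlcm a b := le_sup_left

theorem le_mlcm_right (a b : σ →₀ ℕ) : b ≤ mlcm a b := le_sup_right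

theorem mlcm_le {a b c : σ →₀ ℕ} (ha : a ≤ c) (hb : b ≤ c) : mlcm a b ≤ c := sup_le ha hb

theorem monomial_tsub_one_mul_monomial_tsub {R : Type*} [CommSemiring R] {a b c : σ →₀ ℕ}
    (hab : a ≤ b) (hbc : b ≤ c) (r : R) :
    monomial (c - b) (1 : R) * monomial (b - a) r = monomial (c - a) r := by
  rw [monomial_mul, one_mul, tsub_add_tsub_cancel hbc hab]

theorem monomial_mul_sPoly (m : MonomialOrder σ) (f g : MvPolynomial σ K) {l : σ →₀ ℕ}
    (hl : mlcm (lm m f) (lm m g) ≤ l) :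
    monomial (l - mlcm (lm m f) (lm m g)) 1 * sPoly m f g =
      monomial (l - lm m f) (lc m f)⁻¹ * f - monomial (l - lm m g) (lc m g)⁻¹ * g := by
  rw [sPoly, mul_sub, ← mul_assoc, ← mul_assoc,
    monomial_tsub_one_mul_monomial_tsub (le_mlcm_left _ _) hl,
    monomial_tsub_one_mul_monomial_tsub (le_mlcm_right _ _) hl]

theorem chain_decomposition_general (m : MonomialOrder σ) (f g h : MvPolynomial σ K)
    (hdvd : lm m h ≤ mlcm (lm m f) (lm m g)) :
    ∃ (u v : σ →₀ ℕ) (cu cv : K), cu ≠ 0 ∧ cv ≠ 0 ∧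
      sPoly m f g =
        monomial u cu * sPoly m f h + monomial v cv * sPoly m h g := by
  refine ⟨mlcm (lm m f) (lm m g) - mlcm (lm m f) (lm m h),
    mlcm (lm m f) (lm m g) - mlcm (lm m h) (lm m g), 1, 1, one_ne_zero, one_ne_zero, ?_⟩
  rw [monomial_mul_sPoly m f h (mlcm_le (le_mlcm_left _ _) hdvd),
    monomial_mul_sPoly m h g (mlcm_le hdvd (le_mlcm_right _ _)), sPoly]
  ring

/-- If `lm h` divides `lcm(lm f, lm g)` then there are monomials `u, v` (exponent plus nonzero
coefficient) with `S(f,g) = u·S(f,h) + v·S(h,g)`. -/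
theorem chain_decomposition (m : MonomialOrder σ) (f g h : MvPolynomial σ K)
    (hf : f ≠ 0) (hg : g ≠ 0) (hh : h ≠ 0)
    (hdvd : lm m h ≤ mlcm (lm m f) (lm m g)) :
    ∃ (u v : σ →₀ ℕ) (cu cv : K), cu ≠ 0 ∧ cv ≠ 0 ∧
      sPoly m f g =
        monomial u cu * sPoly m f h + monomial v cv * sPoly m h g :=
  chain_decomposition_general m f g h hdvd

end GB
end

section
/- Key inequality behind the signature product criterion: let α, β ∈ R^m with coprime leading monomials of π α and π β, and let T = max(s(lt(π β)·α), s(lt(π α)·β)) (the signature of the S-pair). Then for every term u of π(β) − lt(π β) we have s(u·α) < T, and for every term v of π(α) − lt(π α) we have s(v·β) < T. -/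
/-! A non-leading term `u` of `π β` satisfies `u ≺ lm(π β)`. Multiplying `α` by a smaller monomial
moves each module term `t·eᵢ` of `α` to a strictly smaller one, because the module order restricted
to a fixed `eᵢ` is the monomial order; hence `s(u·α) < s(lt(π β)·α) ≤ T`, and symmetrically. -/

open MvPolynomial
open scoped MonomialOrder

namespace GB

variable {σ K : Type*} [Field K]

variable {n : ℕ}

/-- The map `π : R^n → R`, `α ↦ Σ αᵢ fᵢ`, determined by the input polynomials `F`. -/
noncomputable def piMap (F α : Fin n → MvPolynomial σ K) : MvPolynomial σ K :=
  ∑ i, α i * F i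

/-- The `i`-th standard basis vector of `R^n`. -/
noncomputable def eV (i : Fin n) : Fin n → MvPolynomial σ K :=
  fun k => if k = i then 1 else 0

/-- Scalar multiplication of a module element by the monomial with exponent `a` and
coefficient `c`. -/
noncomputable def mulV (a : σ →₀ ℕ) (c : K) (α : Fin n → MvPolynomial σ K) :
    Fin n → MvPolynomial σ K :=
  fun i => monomial a c * α i

/-- The S-pair `spair(α,β) = (λ/lt(πα))·α − (λ/lt(πβ))·β`, `λ = lcm(lm(πα), lm(πβ))`. -/
noncomputable def spair (m : MonomialOrder σ) (F α β : Fin n → MvPolynomial σ K) :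
    Fin n → MvPolynomial σ K :=
  fun i =>
    monomial (mlcm (lm m (piMap F α)) (lm m (piMap F β)) - lm m (piMap F α))
        (lc m (piMap F α))⁻¹ * α i
      - monomial (mlcm (lm m (piMap F α)) (lm m (piMap F β)) - lm m (piMap F β))
        (lc m (piMap F β))⁻¹ * β i

/-- A module monomial order on the module monomials `a·eᵢ` of `R^n` (encoded as pairs `(a,i)`),
compatible with the monomial order `m`: a well-founded linear order, compatible with monomial
multiplication, such that `a ≼[m] b` iff `a·eᵢ ≤ b·eᵢ` for all `i`. -/
structure ModOrder (σ : Type*) (n : ℕ) (m : MonomialOrder σ) where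
  /-- the synonym type carrying the order -/
  syn : Type*
  /-- `syn` is linearly ordered -/
  lin : LinearOrder syn := by infer_instance
  /-- identification of module monomials with `syn` -/
  toSyn : ((σ →₀ ℕ) × Fin n) ≃ syn
  /-- the order is a well-order -/
  wf : WellFounded fun x y : syn => x < y
  /-- compatibility with monomial multiplication -/
  smul_compat : ∀ (c : σ →₀ ℕ) (S T : (σ →₀ ℕ) × Fin n),
    toSyn S ≤ toSyn T → toSyn (c + S.1, S.2) ≤ toSyn (c + T.1, T.2)
  /-- compatibility with the monomial order `m` -/
  compat : ∀ (a b : σ →₀ ℕ) (i : Fin n), toSyn (a, i) ≤ toSyn (b, i) ↔ a ≼[m] b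

attribute [instance] ModOrder.lin

/-- The set of module terms (module monomials with nonzero coefficient) of `α ∈ R^n`. -/
noncomputable def msupport (α : Fin n → MvPolynomial σ K) : Finset ((σ →₀ ℕ) × Fin n) := by
  classical
  exact Finset.univ.biUnion fun i => (α i).support.image fun a => (a, i)

/-- The signature of `α`: its maximal module term w.r.t. `mo` (`⊥` for `α = 0`). -/
noncomputable def sig {m : MonomialOrder σ} (mo : ModOrder σ n m)
    (α : Fin n → MvPolynomial σ K) : WithBot mo.syn :=
  ((msupport α).image mo.toSyn).max

/-- `T` is the signature of `α` (as a module monomial). -/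
def IsSigMon {m : MonomialOrder σ} (mo : ModOrder σ n m)
    (α : Fin n → MvPolynomial σ K) (T : (σ →₀ ℕ) × Fin n) : Prop :=
  sig mo α = (mo.toSyn T : WithBot mo.syn)

/-- One 𝔰-reduction step of `α` by some `β ∈ B`: a monomial multiple `b·β` whose polynomial
lead term equals (and cancels) a term of `π α` and with `s(b·β) ≤ s(α)` is subtracted. -/
def SRedStep (m : MonomialOrder σ) (mo : ModOrder σ n m) (F : Fin n → MvPolynomial σ K)
    (B : Set (Fin n → MvPolynomial σ K)) (α α' : Fin n → MvPolynomial σ K) : Prop :=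
  ∃ β ∈ B, ∃ (a : σ →₀ ℕ) (c : K), c ≠ 0 ∧ piMap F β ≠ 0 ∧
    (a + lm m (piMap F β)) ∈ (piMap F α).support ∧
    c * lc m (piMap F β) = (piMap F α).coeff (a + lm m (piMap F β)) ∧
    sig mo (mulV a c β) ≤ sig mo α ∧
    α' = fun i => α i - monomial a c * β i

/-- A regular 𝔰-reduction step: as `SRedStep`, but with `s(b·β) < s(α)`. -/
def RegSRedStep (m : MonomialOrder σ) (mo : ModOrder σ n m) (F : Fin n → MvPolynomial σ K)
    (B : Set (Fin n → MvPolynomial σ K)) (α α' : Fin n → MvPolynomial σ K) : Prop :=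
  ∃ β ∈ B, ∃ (a : σ →₀ ℕ) (c : K), c ≠ 0 ∧ piMap F β ≠ 0 ∧
    (a + lm m (piMap F β)) ∈ (piMap F α).support ∧
    c * lc m (piMap F β) = (piMap F α).coeff (a + lm m (piMap F β)) ∧
    sig mo (mulV a c β) < sig mo α ∧
    α' = fun i => α i - monomial a c * β i

/-- `α` 𝔰-reduces to zero w.r.t. `B`: a chain of 𝔰-reduction steps reaches a syzygy. -/
def SRedToZero (m : MonomialOrder σ) (mo : ModOrder σ n m) (F : Fin n → MvPolynomial σ K)
    (B : Set (Fin n → MvPolynomial σ K)) (α : Fin n → MvPolynomial σ K) : Prop :=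
  ∃ γ, Relation.ReflTransGen (SRedStep m mo F B) α γ ∧ piMap F γ = 0

/-- `α` regular 𝔰-reduces to zero w.r.t. `B`: a chain of regular 𝔰-reduction steps reaches
a syzygy. -/
def RegSRedToZero (m : MonomialOrder σ) (mo : ModOrder σ n m) (F : Fin n → MvPolynomial σ K)
    (B : Set (Fin n → MvPolynomial σ K)) (α : Fin n → MvPolynomial σ K) : Prop :=
  ∃ γ, Relation.ReflTransGen (RegSRedStep m mo F B) α γ ∧ piMap F γ = 0

/-- `B` is a signature Gröbner basis up to signature `T`: every `γ` with `s(γ) < T`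
𝔰-reduces to zero w.r.t. `B`. -/
def SigGBUpTo (m : MonomialOrder σ) (mo : ModOrder σ n m) (F : Fin n → MvPolynomial σ K)
    (B : Set (Fin n → MvPolynomial σ K)) (T : WithBot mo.syn) : Prop :=
  ∀ γ : Fin n → MvPolynomial σ K, sig mo γ < T → SRedToZero m mo F B γ

theorem _root_.Finset.max_image_lt_max_image {ι α : Type*} [LinearOrder α] {s : Finset ι}
    (hs : s.Nonempty) {f g : ι → α} (hfg : ∀ i ∈ s, f i < g i) :
    (s.image f).max < (s.image g).max := by
  obtain ⟨i, hi⟩ := hs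
  have le_sup_g : ∀ j ∈ s, (g j : WithBot α) ≤ s.sup fun k => (g k : WithBot α) :=
    fun j hj => Finset.le_sup (f := fun k => (g k : WithBot α)) hj
  simp only [Finset.max_eq_sup_coe, Finset.sup_image]
  refine (Finset.sup_lt_iff ((WithBot.bot_lt_coe (g i)).trans_le (le_sup_g i hi))).2 ?_
  exact fun j hj => (WithBot.coe_lt_coe.2 (hfg j hj)).trans_le (le_sup_g j hj)

section LeadingTerm

variable {R : Type*} [CommRing R] {m : MonomialOrder σ} {f : MvPolynomial σ R} {u : σ →₀ ℕ}

theorem _root_.MonomialOrder.lt_degree_of_mem_support_sub_leadingTerm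
    (hu : u ∈ (f - m.leadingTerm f).support) : u ≺[m] m.degree f :=
  (m.le_degree hu).trans_lt <| m.degree_sub_leadingTerm_lt_degree <|
    m.degree_ne_zero_of_sub_leadingTerm_ne_zero <| fun h => by simp [h] at hu

theorem _root_.MonomialOrder.coeff_ne_zero_of_mem_support_sub_leadingTerm
    (hu : u ∈ (f - m.leadingTerm f).support) : f.coeff u ≠ 0 := by
  have hne : m.degree f ≠ u := fun h =>
    (m.lt_degree_of_mem_support_sub_leadingTerm hu).ne (congrArg m.toSyn h.symm)
  classical
  rwa [mem_support_iff, coeff_sub, MonomialOrder.leadingTerm, coeff_monomial, if_neg hne,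
    sub_zero] at hu

end LeadingTerm

theorem ModOrder.toSyn_lt_toSyn_iff {m : MonomialOrder σ} (mo : ModOrder σ n m)
    (a b : σ →₀ ℕ) (i : Fin n) : mo.toSyn (a, i) < mo.toSyn (b, i) ↔ a ≺[m] b := by
  simp only [← not_le, mo.compat]

theorem mem_msupport {α : Fin n → MvPolynomial σ K} {t : σ →₀ ℕ} {i : Fin n} :
    (t, i) ∈ msupport α ↔ t ∈ (α i).support := by
  classical
  simp [msupport]

theorem msupport_nonempty {α : Fin n → MvPolynomial σ K} (h : α ≠ 0) :
    (msupport α).Nonempty := by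
  obtain ⟨i, hi⟩ := Function.ne_iff.1 h
  obtain ⟨t, ht⟩ := support_nonempty.2 hi
  exact ⟨(t, i), mem_msupport.2 ht⟩

theorem ne_zero_of_piMap_ne_zero {F α : Fin n → MvPolynomial σ K} (h : piMap F α ≠ 0) :
    α ≠ 0 := by
  rintro rfl
  simp [piMap] at h

theorem support_monomial_mul (a : σ →₀ ℕ) {c : K} (hc : c ≠ 0) (p : MvPolynomial σ K) :
    (monomial a c * p).support = p.support.map (addLeftEmbedding a) :=
  AddMonoidAlgebra.support_coeff_single_mul (G := σ →₀ ℕ) p c (fun y => by simp [hc]) a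

theorem msupport_mulV [DecidableEq σ] {a : σ →₀ ℕ} {c : K} (hc : c ≠ 0)
    (α : Fin n → MvPolynomial σ K) :
    msupport (mulV a c α) = (msupport α).image fun S => (a + S.1, S.2) := by
  ext ⟨t, i⟩
  simp [mem_msupport, mulV, support_monomial_mul a hc]

theorem sig_mulV {m : MonomialOrder σ} (mo : ModOrder σ n m) {a : σ →₀ ℕ} {c : K} (hc : c ≠ 0)
    (α : Fin n → MvPolynomial σ K) :
    sig mo (mulV a c α) = ((msupport α).image fun S => mo.toSyn (a + S.1, S.2)).max := by
  classical
  rw [sig, msupport_mulV hc, Finset.image_image]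
  rfl

theorem sig_mulV_lt_sig_mulV {m : MonomialOrder σ} (mo : ModOrder σ n m) {a b : σ →₀ ℕ}
    {c d : K} (hc : c ≠ 0) (hd : d ≠ 0) (hab : a ≺[m] b) {α : Fin n → MvPolynomial σ K}
    (hα : α ≠ 0) : sig mo (mulV a c α) < sig mo (mulV b d α) := by
  rw [sig_mulV mo hc, sig_mulV mo hd]
  refine Finset.max_image_lt_max_image (msupport_nonempty hα) fun S _ => ?_
  rw [mo.toSyn_lt_toSyn_iff]
  simpa only [map_add] using add_lt_add_of_lt_of_le hab le_rfl

theorem sig_mulV_coeff_lt_sig_mulV_lc {m : MonomialOrder σ} (mo : ModOrder σ n m)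
    {p : MvPolynomial σ K} {u : σ →₀ ℕ} (hu : u ∈ (p - lt m p).support)
    {α : Fin n → MvPolynomial σ K} (hα : α ≠ 0) :
    sig mo (mulV u (p.coeff u) α) < sig mo (mulV (lm m p) (lc m p) α) := by
  have hp : p ≠ 0 := by
    rintro rfl
    simp [lt, lc] at hu
  exact sig_mulV_lt_sig_mulV mo (m.coeff_ne_zero_of_mem_support_sub_leadingTerm hu)
    (m.leadingCoeff_ne_zero_iff.2 hp) (m.lt_degree_of_mem_support_sub_leadingTerm hu) hα

theorem sig_product_key_inequality_general (m : MonomialOrder σ) (mo : ModOrder σ n m)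
    (F α β : Fin n → MvPolynomial σ K)
    (hα : piMap F α ≠ 0) (hβ : piMap F β ≠ 0) :
    (∀ u ∈ (piMap F β - lt m (piMap F β)).support,
      sig mo (mulV u ((piMap F β).coeff u) α) <
        max (sig mo (mulV (lm m (piMap F β)) (lc m (piMap F β)) α))
            (sig mo (mulV (lm m (piMap F α)) (lc m (piMap F α)) β))) ∧
    (∀ v ∈ (piMap F α - lt m (piMap F α)).support,
      sig mo (mulV v ((piMap F α).coeff v) β) <
        max (sig mo (mulV (lm m (piMap F β)) (lc m (piMap F β)) α))
            (sig mo (mulV (lm m (piMap F α)) (lc m (piMap F α)) β))) :=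
  ⟨fun _ hu => (sig_mulV_coeff_lt_sig_mulV_lc mo hu (ne_zero_of_piMap_ne_zero hα)).trans_le
      (le_max_left _ _),
    fun _ hv => (sig_mulV_coeff_lt_sig_mulV_lc mo hv (ne_zero_of_piMap_ne_zero hβ)).trans_le
      (le_max_right _ _)⟩

/-- **Key inequality behind the signature product criterion.** If `π α` and `π β` have coprime
leading monomials and `T = max(s(lt(πβ)·α), s(lt(πα)·β))` is the signature of the S-pair, then
multiplying `α` by any non-lead term `u` of `π β` gives signature `s(u·α) < T`, and
symmetrically for non-lead terms `v` of `π α`. -/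
theorem sig_product_key_inequality (m : MonomialOrder σ) (mo : ModOrder σ n m)
    (F α β : Fin n → MvPolynomial σ K)
    (hα : piMap F α ≠ 0) (hβ : piMap F β ≠ 0)
    (hcop : mlcm (lm m (piMap F α)) (lm m (piMap F β))
      = lm m (piMap F α) + lm m (piMap F β)) :
    (∀ u ∈ (piMap F β - lt m (piMap F β)).support,
      sig mo (mulV u ((piMap F β).coeff u) α) <
        max (sig mo (mulV (lm m (piMap F β)) (lc m (piMap F β)) α))
            (sig mo (mulV (lm m (piMap F α)) (lc m (piMap F α)) β))) ∧
    (∀ v ∈ (piMap F α - lt m (piMap F α)).support,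
      sig mo (mulV v ((piMap F α).coeff v) β) <
        max (sig mo (mulV (lm m (piMap F β)) (lc m (piMap F β)) α))
            (sig mo (mulV (lm m (piMap F α)) (lc m (piMap F α)) β))) :=
  sig_product_key_inequality_general m mo F α β hα hβ

end GB
end

section
/- If B ⊂ R^m is a signature Gröbner basis for I = ⟨f_1,...,f_m⟩ (i.e., every nonzero α ∈ R^m s-reduces to zero w.r.t. B), then the set of images π(B) = { π(α) : α ∈ B } is a Gröbner basis for I: the leading terms of π(B) generate the leading ideal of I. -/
/-!
A single 𝔰-reduction step by `β` subtracts from `π α` a monomial multiple of `π β` whose leading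
monomial is a term of `π α`. As long as no `lm(π β)` with `β ∈ B` divides `lm(π α)`, that term lies
strictly below `lm(π α)`, so the step keeps `π α` nonzero with the same leading monomial. A chain
reaching a syzygy must therefore perform a top reduction: for every `p = π α ≠ 0` in `I`, some
`lm(π β)` divides `lm p`, and then `lt p` is a multiple of `lt(π β)`.
-/

open MvPolynomial
open scoped MonomialOrder

namespace GB

variable {σ K : Type*} [Field K]

variable {n : ℕ}

section LeadingTerm

variable {m : MonomialOrder σ}

lemma lm_eq_degree (p : MvPolynomial σ K) : lm m p = m.degree p := rfl

lemma lt_eq_leadingTerm (p : MvPolynomial σ K) : lt m p = m.leadingTerm p := rfl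

lemma leadingTerm_mem_span_leadingTerm {p q : MvPolynomial σ K} (hq : q ≠ 0)
    (hle : m.degree q ≤ m.degree p) :
    m.leadingTerm p ∈ Ideal.span {m.leadingTerm q} := by
  refine Ideal.mem_span_singleton'.2
    ⟨monomial (m.degree p - m.degree q) (m.leadingCoeff p / m.leadingCoeff q), ?_⟩
  rw [MonomialOrder.leadingTerm, MonomialOrder.leadingTerm, monomial_mul,
    tsub_add_cancel_of_le hle, div_mul_cancel₀ _ (m.leadingCoeff_ne_zero_iff.2 hq)]

end LeadingTerm

section PiMap

lemma piMap_zero (F : Fin n → MvPolynomial σ K) : piMap F 0 = 0 := by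
  simp [piMap]

lemma mem_span_range_iff_exists_piMap {F : Fin n → MvPolynomial σ K} {p : MvPolynomial σ K} :
    p ∈ Ideal.span (Set.range F) ↔ ∃ α, piMap F α = p := by
  simp [Ideal.mem_span_range_iff_exists_fun, piMap]

lemma piMap_sub_monomial_mul (F α β : Fin n → MvPolynomial σ K) (a : σ →₀ ℕ) (c : K) :
    piMap F (fun i => α i - monomial a c * β i) = piMap F α - monomial a c * piMap F β := by
  simp [piMap, sub_mul, Finset.sum_sub_distrib, Finset.mul_sum, mul_assoc]

end PiMap

section Reduction

variable {m : MonomialOrder σ} {mo : ModOrder σ n m} {F : Fin n → MvPolynomial σ K}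
  {B : Set (Fin n → MvPolynomial σ K)}

lemma SRedStep.piMap_ne_zero_and_degree_eq {α α' : Fin n → MvPolynomial σ K}
    (hstep : SRedStep m mo F B α α') (hα : piMap F α ≠ 0)
    (hnotop : ∀ β ∈ B, piMap F β ≠ 0 → ¬ m.degree (piMap F β) ≤ m.degree (piMap F α)) :
    piMap F α' ≠ 0 ∧ m.degree (piMap F α') = m.degree (piMap F α) := by
  obtain ⟨β, hβB, a, c, hc, hβ, hmem, -, -, rfl⟩ := hstep
  rw [lm_eq_degree] at hmem
  have hne : a + m.degree (piMap F β) ≠ m.degree (piMap F α) := fun h =>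
    hnotop β hβB hβ (h ▸ le_add_self)
  have hlt : m.degree (monomial a c * piMap F β) ≺[m] m.degree (piMap F α) := by
    classical
    rw [m.degree_mul (monomial_eq_zero.not.2 hc) hβ, m.degree_monomial, if_neg hc]
    exact lt_of_le_of_ne (m.le_degree hmem) (m.toSyn.injective.ne hne)
  rw [piMap_sub_monomial_mul, m.degree_sub_of_lt hlt]
  refine ⟨fun h0 => hα ?_, rfl⟩
  rw [← m.leadingCoeff_eq_zero_iff, ← m.leadingCoeff_sub_of_lt hlt, h0, m.leadingCoeff_zero]

lemma exists_degree_le_of_sRedToZero {α : Fin n → MvPolynomial σ K}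
    (hred : SRedToZero m mo F B α) (hα : piMap F α ≠ 0) :
    ∃ β ∈ B, piMap F β ≠ 0 ∧ m.degree (piMap F β) ≤ m.degree (piMap F α) := by
  by_contra! hnotop
  obtain ⟨γ, hchain, hγ⟩ := hred
  suffices piMap F γ ≠ 0 ∧ m.degree (piMap F γ) = m.degree (piMap F α) from this.1 hγ
  clear hγ
  induction hchain with
  | refl => exact ⟨hα, rfl⟩
  | tail _ hstep ih =>
    obtain ⟨hne, hdeg⟩ := ih
    obtain ⟨hne', hdeg'⟩ :=
      hstep.piMap_ne_zero_and_degree_eq hne (by simpa only [hdeg] using hnotop)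
    exact ⟨hne', hdeg'.trans hdeg⟩

end Reduction

theorem sigGB_is_GB_general (m : MonomialOrder σ) (mo : ModOrder σ n m)
    (F : Fin n → MvPolynomial σ K) (B : Set (Fin n → MvPolynomial σ K))
    (hB : ∀ α : Fin n → MvPolynomial σ K, α ≠ 0 → SRedToZero m mo F B α) :
    Ideal.span {q : MvPolynomial σ K | ∃ α ∈ B, piMap F α ≠ 0 ∧ q = lt m (piMap F α)} =
      Ideal.span {q : MvPolynomial σ K |
        ∃ p ∈ Ideal.span (Set.range F), p ≠ 0 ∧ q = lt m p} := by
  simp only [lt_eq_leadingTerm]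
  apply le_antisymm
  · exact Ideal.span_mono fun q ⟨α, _, hα, hq⟩ =>
      ⟨piMap F α, mem_span_range_iff_exists_piMap.2 ⟨α, rfl⟩, hα, hq⟩
  · rw [Ideal.span_le]
    rintro q ⟨p, hp, hp0, rfl⟩
    obtain ⟨α, rfl⟩ := mem_span_range_iff_exists_piMap.1 hp
    have hα : α ≠ 0 := by rintro rfl; exact hp0 (piMap_zero F)
    obtain ⟨β, hβB, hβ, hle⟩ := exists_degree_le_of_sRedToZero (hB α hα) hp0
    refine Ideal.span_mono (Set.singleton_subset_iff.2 ?_)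
      (leadingTerm_mem_span_leadingTerm hβ hle)
    exact ⟨β, hβB, hβ, rfl⟩

/-- If `B` is a (finite) signature Gröbner basis for `I = ⟨f₁,...,f_n⟩` — every nonzero
`α ∈ R^n` 𝔰-reduces to zero w.r.t. `B` — then `π(B)` is a Gröbner basis for `I`: the leading
terms of the elements of `π(B)` generate the leading ideal of `I`. -/
theorem sigGB_is_GB (m : MonomialOrder σ) (mo : ModOrder σ n m)
    (F : Fin n → MvPolynomial σ K) (B : Set (Fin n → MvPolynomial σ K)) (hBfin : B.Finite)
    (hB : ∀ α : Fin n → MvPolynomial σ K, α ≠ 0 → SRedToZero m mo F B α) :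
    Ideal.span {q : MvPolynomial σ K | ∃ α ∈ B, piMap F α ≠ 0 ∧ q = lt m (piMap F α)} =
      Ideal.span {q : MvPolynomial σ K |
        ∃ p ∈ Ideal.span (Set.range F), p ≠ 0 ∧ q = lt m p} :=
  sigGB_is_GB_general m mo F B hB

end GB
end

section
/- Under <_pot, let H contain all Koszul syzygy lead terms lt(π α)·e_k for α of index < k, where e_k is the latest index. If α, β ∈ R^m with ind(α) < ind(β) = k and the S-pair spair(α,β) satisfies the product criterion (lm(π α) and lm(π β) coprime), then the signature of spair(α,β) is divisible by the signature of some element of H; i.e., the S-pair is rewritable with respect to H. -/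
open MvPolynomial
open scoped MonomialOrder

namespace GB

variable {σ K : Type*} [Field K]

variable {n : ℕ}

/-- Divisibility of module monomials: same index, and the exponent divides. -/
def ModDvd {N : ℕ} (S T : (σ →₀ ℕ) × Fin N) : Prop :=
  S.2 = T.2 ∧ ∃ w : σ →₀ ℕ, S.1 + w = T.1


/-!
Under the position-over-term order every term of `α` has index at most `ind α < k`, so the
`α`-half of `spair(α,β)` lies strictly below index `k`. Coprimality makes the `β`-half equal to
`lm(π α)·β` up to a unit, whose signature is `lm(π α)·s(β)`. Hence the signature of the S-pair
is `lm(π α)·s(β)`, a multiple of the Koszul signature `lm(π α)·e_k` that `H` provides for `α`.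
-/

section Signature

variable {m : MonomialOrder σ} {mo : ModOrder σ n m} {α β : Fin n → MvPolynomial σ K}
  {S : (σ →₀ ℕ) × Fin n}

lemma mem_msupport_iff {T : (σ →₀ ℕ) × Fin n} : T ∈ msupport α ↔ T.1 ∈ (α T.2).support := by
  classical
  simp only [msupport, Finset.mem_biUnion, Finset.mem_image, Finset.mem_univ, true_and]
  constructor
  · rintro ⟨i, a, ha, rfl⟩
    exact ha
  · exact fun h => ⟨T.2, T.1, h, rfl⟩

lemma sig_le_iff : sig mo α ≤ mo.toSyn S ↔ ∀ T ∈ msupport α, mo.toSyn T ≤ mo.toSyn S := by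
  refine ⟨fun h T hT => ?_, fun h => Finset.max_le ?_⟩
  · exact WithBot.coe_le_coe.mp ((Finset.le_max (Finset.mem_image_of_mem _ hT)).trans h)
  · intro _ hs
    obtain ⟨T, hT, rfl⟩ := Finset.mem_image.mp hs
    exact WithBot.coe_le_coe.mpr (h T hT)

lemma le_sig_of_mem {T : (σ →₀ ℕ) × Fin n} (hT : T ∈ msupport α) :
    (mo.toSyn T : WithBot mo.syn) ≤ sig mo α :=
  Finset.le_max (Finset.mem_image_of_mem _ hT)

lemma isSigMon_iff :
    IsSigMon mo α S ↔ S ∈ msupport α ∧ ∀ T ∈ msupport α, mo.toSyn T ≤ mo.toSyn S := by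
  refine ⟨fun h => ⟨?_, sig_le_iff.mp h.le⟩, fun ⟨hS, hle⟩ => ?_⟩
  · obtain ⟨T, hT, hTS⟩ := Finset.mem_image.mp (Finset.mem_of_max h)
    exact mo.toSyn.injective hTS ▸ hT
  · exact le_antisymm (sig_le_iff.mpr hle) (le_sig_of_mem hS)

lemma sig_mulV_le (hS : IsSigMon mo α S) (a : σ →₀ ℕ) (c : K) :
    sig mo (mulV a c α) ≤ mo.toSyn (a + S.1, S.2) := by
  refine sig_le_iff.mpr fun ⟨b, i⟩ hT => ?_
  rw [mem_msupport_iff, mulV, mem_support_iff, coeff_monomial_mul'] at hT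
  split_ifs at hT with hab
  · have hmem : (b - a, i) ∈ msupport α :=
      mem_msupport_iff.mpr (mem_support_iff.mpr (right_ne_zero_of_mul hT))
    simpa [add_tsub_cancel_of_le hab] using
      mo.smul_compat a _ _ ((isSigMon_iff.mp hS).2 _ hmem)
  · exact absurd rfl hT

lemma isSigMon_mulV (hS : IsSigMon mo α S) (a : σ →₀ ℕ) {c : K} (hc : c ≠ 0) :
    IsSigMon mo (mulV a c α) (a + S.1, S.2) := by
  refine isSigMon_iff.mpr ⟨?_, sig_le_iff.mp (sig_mulV_le hS a c)⟩
  have hS' := mem_msupport_iff.mp (isSigMon_iff.mp hS).1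
  rw [mem_msupport_iff, mulV, mem_support_iff, coeff_monomial_mul]
  exact mul_ne_zero hc (mem_support_iff.mp hS')

lemma isSigMon_sub_of_sig_lt (hβ : IsSigMon mo β S) (hα : sig mo α < mo.toSyn S) :
    IsSigMon mo (α - β) S := by
  classical
  obtain ⟨hSβ, hleβ⟩ := isSigMon_iff.mp hβ
  have hSα : S ∉ msupport α := fun hS => (le_sig_of_mem hS).not_gt hα
  refine isSigMon_iff.mpr ⟨?_, fun T hT => ?_⟩
  · rw [mem_msupport_iff, mem_support_iff] at hSα hSβ ⊢
    simpa [not_not.mp hSα] using hSβ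
  · rw [mem_msupport_iff] at hT
    rcases Finset.mem_union.mp (support_sub σ _ _ hT) with hTα | hTβ
    · exact (WithBot.coe_lt_coe.mp ((le_sig_of_mem (mem_msupport_iff.mpr hTα)).trans_lt hα)).le
    · exact hleβ T (mem_msupport_iff.mpr hTβ)

lemma spair_eq_of_coprime {F : Fin n → MvPolynomial σ K}
    (hcop : mlcm (lm m (piMap F α)) (lm m (piMap F β))
      = lm m (piMap F α) + lm m (piMap F β)) :
    spair m F α β =
      mulV (mlcm (lm m (piMap F α)) (lm m (piMap F β)) - lm m (piMap F α)) (lc m (piMap F α))⁻¹ α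
        - mulV (lm m (piMap F α)) (lc m (piMap F β))⁻¹ β := by
  funext i
  simp only [spair, mulV, Pi.sub_apply, hcop, add_tsub_cancel_right]

end Signature

/-- **Product criterion S-pairs of mixed index are rewritable under `<_pot`.** Let `mo` be the
position-over-term order and let `H` contain, for every `γ` of index `< k` with `π γ ≠ 0`, an
element with (Koszul) signature `lt(π γ)·e_k`. If `ind(α) < ind(β) = k` and `spair(α,β)`
satisfies the product criterion, then the signature of `spair(α,β)` is divisible by the
signature of some element of `H`, i.e. the S-pair is rewritable w.r.t. `H`. -/
theorem pot_product_criterion_rewritable (m : MonomialOrder σ) (mo : ModOrder σ n m)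
    (hpot : ∀ S T : (σ →₀ ℕ) × Fin n,
      mo.toSyn S < mo.toSyn T ↔ (S.2 < T.2 ∨ (S.2 = T.2 ∧ (S.1 ≺[m] T.1))))
    (F : Fin n → MvPolynomial σ K) (k : Fin n)
    (H : Set (Fin n → MvPolynomial σ K))
    (hH : ∀ γ : Fin n → MvPolynomial σ K, ∀ Sγ : (σ →₀ ℕ) × Fin n,
      IsSigMon mo γ Sγ → Sγ.2 < k → piMap F γ ≠ 0 →
      ∃ τ ∈ H, IsSigMon mo τ (lm m (piMap F γ), k))
    (α β : Fin n → MvPolynomial σ K)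
    (hα : piMap F α ≠ 0) (hβ : piMap F β ≠ 0)
    (Sα Sβ : (σ →₀ ℕ) × Fin n)
    (hSα : IsSigMon mo α Sα) (hSβ : IsSigMon mo β Sβ)
    (hind : Sα.2 < Sβ.2) (hk : Sβ.2 = k)
    (hcop : mlcm (lm m (piMap F α)) (lm m (piMap F β))
      = lm m (piMap F α) + lm m (piMap F β)) :
    ∃ τ ∈ H, ∃ Sτ Ssp : (σ →₀ ℕ) × Fin n,
      IsSigMon mo τ Sτ ∧ IsSigMon mo (spair m F α β) Ssp ∧ ModDvd Sτ Ssp := by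
  obtain ⟨τ, hτH, hτ⟩ := hH α Sα hSα (hk ▸ hind) hα
  have hlcβ : lc m (piMap F β) ≠ 0 := m.leadingCoeff_ne_zero_iff.mpr hβ
  have hsig : IsSigMon mo (spair m F α β) (lm m (piMap F α) + Sβ.1, Sβ.2) := by
    rw [spair_eq_of_coprime hcop]
    refine isSigMon_sub_of_sig_lt (isSigMon_mulV hSβ _ (inv_ne_zero hlcβ)) ?_
    exact (sig_mulV_le hSα _ _).trans_lt (WithBot.coe_lt_coe.mpr ((hpot _ _).mpr (Or.inl hind)))
  exact ⟨τ, hτH, _, _, hτ, hsig, hk.symm, Sβ.1, rfl⟩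

end GB
end
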